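/- Let Σ̂ and Σ be n×n real symmetric positive semidefinite matrices. Then Tr[(Σ̂^{1/2} Σ Σ̂^{1/2})^{1/2}] is the greatest element of the set { Tr[Z] : Z ∈ ℝ^{n×n}, the block matrix [[Σ̂, Z], [Zᵀ, Σ]] is positive semidefinite }; in particular the maximum is attained. -/

import Mathlib

open Matrix

/-- The symmetric positive semidefinite square root of a positive semidefinite
real matrix (junk value `0` on non-PSD matrices). -/
noncomputable def psdSqrt {n : ℕ} (M : Matrix (Fin n) (Fin n) ℝ) :
    Matrix (Fin n) (Fin n) ℝ :=
  open scoped Classical in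
  if h : M.PosSemidef then
    (h.1.eigenvectorUnitary : Matrix (Fin n) (Fin n) ℝ) *
      Matrix.diagonal (fun i => Real.sqrt (h.1.eigenvalues i)) *
      (star h.1.eigenvectorUnitary : Matrix (Fin n) (Fin n) ℝ)
  else 0

set_option linter.unusedSectionVars false
set_option linter.unusedVariables false

variable {m k : Type*} [Fintype m] [Fintype k]

lemma realCT (A : Matrix m k ℝ) : Aᴴ = Aᵀ := by
  ext i j; simp [conjTranspose_apply]

lemma dot_self_nonneg (x : m → ℝ) : 0 ≤ x ⬝ᵥ x :=
  Finset.sum_nonneg fun i _ => mul_self_nonneg _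

lemma cs_dot (x y : m → ℝ) : |x ⬝ᵥ y| ≤ Real.sqrt (x ⬝ᵥ x) * Real.sqrt (y ⬝ᵥ y) := by
  have h := Finset.sum_mul_sq_le_sq_mul_sq Finset.univ x y
  have h2 : (x ⬝ᵥ y)^2 ≤ (x ⬝ᵥ x) * (y ⬝ᵥ y) := by
    simpa [dotProduct, pow_two, mul_comm, mul_left_comm] using h
  calc |x ⬝ᵥ y| ≤ Real.sqrt ((x ⬝ᵥ x) * (y ⬝ᵥ y)) := Real.abs_le_sqrt h2
  _ = _ := Real.sqrt_mul (dot_self_nonneg x) _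

/-- move a matrix across a real dot product -/
lemma dot_mulVec_move (A : Matrix m k ℝ) (x : m → ℝ) (y : k → ℝ) :
    x ⬝ᵥ (A *ᵥ y) = (Aᵀ *ᵥ x) ⬝ᵥ y := by
  rw [Matrix.dotProduct_mulVec, Matrix.mulVec_transpose]


lemma dot_mulVec_self (A : Matrix m k ℝ) (y : k → ℝ) :
    (A *ᵥ y) ⬝ᵥ (A *ᵥ y) = y ⬝ᵥ ((Aᵀ * A) *ᵥ y) := by
  rw [← Matrix.mulVec_mulVec, dot_mulVec_move, dotProduct_comm]

/-- If `W` is a contraction then so is `Wᵀ`. -/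
lemma transpose_contraction (W : Matrix m k ℝ)
    (hW : ∀ z, (W *ᵥ z) ⬝ᵥ (W *ᵥ z) ≤ z ⬝ᵥ z) (u : m → ℝ) :
    (Wᵀ *ᵥ u) ⬝ᵥ (Wᵀ *ᵥ u) ≤ u ⬝ᵥ u := by
  set s := (Wᵀ *ᵥ u) ⬝ᵥ (Wᵀ *ᵥ u) with hs
  have hs0 : 0 ≤ s := dot_self_nonneg _
  have huu : 0 ≤ u ⬝ᵥ u := dot_self_nonneg _
  have key : s ≤ Real.sqrt (u ⬝ᵥ u) * Real.sqrt s := by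
    have h1 : s = u ⬝ᵥ (W *ᵥ (Wᵀ *ᵥ u)) := by
      rw [dot_mulVec_move]
    have h2 := cs_dot u (W *ᵥ (Wᵀ *ᵥ u))
    have h3 : (W *ᵥ (Wᵀ *ᵥ u)) ⬝ᵥ (W *ᵥ (Wᵀ *ᵥ u)) ≤ s := hW _
    calc s = u ⬝ᵥ (W *ᵥ (Wᵀ *ᵥ u)) := h1
    _ ≤ |u ⬝ᵥ (W *ᵥ (Wᵀ *ᵥ u))| := le_abs_self _
    _ ≤ Real.sqrt (u ⬝ᵥ u) * Real.sqrt ((W *ᵥ (Wᵀ *ᵥ u)) ⬝ᵥ (W *ᵥ (Wᵀ *ᵥ u))) := h2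
    _ ≤ Real.sqrt (u ⬝ᵥ u) * Real.sqrt s := by
        exact mul_le_mul_of_nonneg_left (Real.sqrt_le_sqrt h3) (Real.sqrt_nonneg _)
  nlinarith [Real.sq_sqrt hs0, Real.sq_sqrt huu, Real.sqrt_nonneg s, Real.sqrt_nonneg (u ⬝ᵥ u),
    Real.sqrt_nonneg ((u ⬝ᵥ u)), mul_self_nonneg (Real.sqrt (u ⬝ᵥ u) - Real.sqrt s)]

section sfun
variable {n : ℕ} {M : Matrix (Fin n) (Fin n) ℝ}

/-- spectral functional calculus of a real hermitian matrix -/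
noncomputable def sfun (hM : M.IsHermitian) (f : ℝ → ℝ) : Matrix (Fin n) (Fin n) ℝ :=
  (hM.eigenvectorUnitary : Matrix (Fin n) (Fin n) ℝ) * diagonal (f ∘ hM.eigenvalues) *
    star (hM.eigenvectorUnitary : Matrix (Fin n) (Fin n) ℝ)

lemma star_mul_self_eigen (hM : M.IsHermitian) :
    star (hM.eigenvectorUnitary : Matrix (Fin n) (Fin n) ℝ) *
      (hM.eigenvectorUnitary : Matrix (Fin n) (Fin n) ℝ) = 1 :=
  Matrix.mem_unitaryGroup_iff'.mp hM.eigenvectorUnitary.2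

lemma self_mul_star_eigen (hM : M.IsHermitian) :
    (hM.eigenvectorUnitary : Matrix (Fin n) (Fin n) ℝ) *
      star (hM.eigenvectorUnitary : Matrix (Fin n) (Fin n) ℝ) = 1 :=
  Matrix.mem_unitaryGroup_iff.mp hM.eigenvectorUnitary.2

lemma sfun_mul_sfun (hM : M.IsHermitian) (f g : ℝ → ℝ) :
    sfun hM f * sfun hM g = sfun hM (fun t => f t * g t) := by
  unfold sfun
  rw [mul_assoc, mul_assoc, ← mul_assoc (star _) _, ← mul_assoc (star _) _,
    star_mul_self_eigen hM, one_mul, ← mul_assoc, ← mul_assoc, mul_assoc _ _ (diagonal _),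
    diagonal_mul_diagonal]
  rfl

lemma sfun_id (hM : M.IsHermitian) : sfun hM (fun t => t) = M := by
  have h := hM.spectral_theorem
  rw [RCLike.ofReal_real_eq_id, Function.id_comp] at h
  unfold sfun
  exact h.symm

lemma sfun_one (hM : M.IsHermitian) : sfun hM (fun _ => 1) = 1 := by
  unfold sfun
  rw [show ((fun _ => (1:ℝ)) ∘ hM.eigenvalues) = fun _ => (1:ℝ) from rfl, diagonal_one,
    mul_one, self_mul_star_eigen hM]

lemma sfun_congr (hM : M.IsHermitian) {f g : ℝ → ℝ}
    (h : ∀ i, f (hM.eigenvalues i) = g (hM.eigenvalues i)) : sfun hM f = sfun hM g := by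
  unfold sfun
  have : (f ∘ hM.eigenvalues) = (g ∘ hM.eigenvalues) := funext h
  rw [this]

lemma sfun_conjTranspose (hM : M.IsHermitian) (f : ℝ → ℝ) : (sfun hM f)ᴴ = sfun hM f := by
  unfold sfun
  have hD : star (diagonal (f ∘ hM.eigenvalues)) = diagonal (f ∘ hM.eigenvalues) := by
    simp [star_eq_conjTranspose, diagonal_conjTranspose]
  rw [← star_eq_conjTranspose, Matrix.star_mul, Matrix.star_mul, star_star, hD, ← mul_assoc]

lemma sfun_posSemidef (hM : M.IsHermitian) {f : ℝ → ℝ}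
    (h : ∀ i, 0 ≤ f (hM.eigenvalues i)) : (sfun hM f).PosSemidef := by
  unfold sfun
  exact (Matrix.posSemidef_diagonal_iff.mpr (fun i => h i)).mul_mul_conjTranspose_same _

lemma sfun_trace (hM : M.IsHermitian) (f : ℝ → ℝ) :
    (sfun hM f).trace = ∑ i, f (hM.eigenvalues i) := by
  unfold sfun
  rw [Matrix.trace_mul_cycle, star_mul_self_eigen hM, one_mul, Matrix.trace_diagonal]
  rfl

end sfun

section spec2
variable {n : ℕ} {M : Matrix (Fin n) (Fin n) ℝ}

lemma sfun_add (hM : M.IsHermitian) (f g : ℝ → ℝ) :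
    sfun hM f + sfun hM g = sfun hM (fun t => f t + g t) := by
  unfold sfun
  rw [← add_mul, ← Matrix.mul_add]
  congr 2
  ext i j
  rcases eq_or_ne i j with h | h
  · subst h; simp
  · simp [Matrix.diagonal_apply_ne _ h]

lemma sfun_quad_le (hM : M.IsHermitian) {f : ℝ → ℝ}
    (h0 : ∀ i, 0 ≤ f (hM.eigenvalues i)) (h1 : ∀ i, f (hM.eigenvalues i) ≤ 1) (x : Fin n → ℝ) :
    x ⬝ᵥ (sfun hM f *ᵥ x) ≤ x ⬝ᵥ x := by
  have hp : (sfun hM (fun t => 1 - f t)).PosSemidef :=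
    sfun_posSemidef hM (fun i => by linarith [h1 i])
  have h2 := hp.dotProduct_mulVec_nonneg x
  have h3 : sfun hM (fun t => 1 - f t) = 1 - sfun hM f := by
    rw [eq_sub_iff_add_eq, sfun_add]
    have he : (fun t => (1:ℝ) - f t + f t) = fun _ => (1:ℝ) := by funext t; ring
    rw [he, sfun_one]
  rw [h3] at h2
  simp only [star_trivial, Matrix.sub_mulVec, Matrix.one_mulVec, dotProduct_sub] at h2
  linarith

lemma contraction_of_eq_sfun {m : Type*} [Fintype m] (hM : M.IsHermitian) {f : ℝ → ℝ}
    (C : Matrix m (Fin n) ℝ) (hC : Cᵀ * C = sfun hM f)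
    (h0 : ∀ i, 0 ≤ f (hM.eigenvalues i)) (h1 : ∀ i, f (hM.eigenvalues i) ≤ 1) (x : Fin n → ℝ) :
    (C *ᵥ x) ⬝ᵥ (C *ᵥ x) ≤ x ⬝ᵥ x := by
  rw [dot_mulVec_self, hC]
  exact sfun_quad_le hM h0 h1 x

/-- the j-th eigencolumn -/
noncomputable def evec (hM : M.IsHermitian) (j : Fin n) : Fin n → ℝ :=
  fun i => (hM.eigenvectorUnitary : Matrix (Fin n) (Fin n) ℝ) i j

lemma evec_dot_self (hM : M.IsHermitian) (j : Fin n) : evec hM j ⬝ᵥ evec hM j = 1 := by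
  have h := congrFun (congrFun (star_mul_self_eigen hM) j) j
  rw [Matrix.mul_apply] at h
  simp only [Matrix.one_apply_eq] at h
  rw [← h]
  simp [dotProduct, evec, Matrix.star_apply]

lemma spectral_real (hM : M.IsHermitian) :
    M = (hM.eigenvectorUnitary : Matrix (Fin n) (Fin n) ℝ) * diagonal hM.eigenvalues *
      star (hM.eigenvectorUnitary : Matrix (Fin n) (Fin n) ℝ) := by
  have h := hM.spectral_theorem
  rwa [RCLike.ofReal_real_eq_id, Function.id_comp] at h

lemma mulVec_evec (hM : M.IsHermitian) (j : Fin n) :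
    M *ᵥ evec hM j = hM.eigenvalues j • evec hM j := by
  set V : Matrix (Fin n) (Fin n) ℝ := (hM.eigenvectorUnitary : Matrix (Fin n) (Fin n) ℝ) with hV
  have e1 : M * V = (V * diagonal hM.eigenvalues * star V) * V :=
    congrArg (· * V) (spectral_real hM)
  have e2 : (V * diagonal hM.eigenvalues * star V) * V = V * diagonal hM.eigenvalues := by
    rw [mul_assoc, star_mul_self_eigen hM, mul_one]
  have hMV : M * V = V * diagonal hM.eigenvalues := e1.trans e2
  funext i
  have h := congrFun (congrFun hMV i) j
  rw [Matrix.mul_apply, Matrix.mul_diagonal] at h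
  simp only [Matrix.mulVec, dotProduct, evec, Pi.smul_apply, smul_eq_mul]
  rw [h]
  ring

lemma trace_eq_sum_evec (hM : M.IsHermitian) (D : Matrix (Fin n) (Fin n) ℝ) :
    D.trace = ∑ j, evec hM j ⬝ᵥ (D *ᵥ evec hM j) := by
  set V : Matrix (Fin n) (Fin n) ℝ := (hM.eigenvectorUnitary : Matrix (Fin n) (Fin n) ℝ) with hV
  have h1 : (star V * D * V).trace = D.trace := by
    rw [Matrix.trace_mul_cycle, self_mul_star_eigen hM, one_mul]
  rw [← h1, Matrix.trace]
  congr 1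
  funext j
  rw [Matrix.diag_apply]
  simp only [Matrix.mul_apply, Matrix.star_apply, star_trivial]
  simp only [dotProduct, Matrix.mulVec, evec, dotProduct]
  simp only [Finset.mul_sum, Finset.sum_mul]
  rw [Finset.sum_comm]
  exact Finset.sum_congr rfl fun k _ => Finset.sum_congr rfl fun i _ => by ring

end spec2

section main
variable {n : ℕ}

/-- pseudo-inverse of sqrt, scalar level -/
noncomputable def ginv : ℝ → ℝ := fun t => if t = 0 then 0 else (Real.sqrt t)⁻¹

noncomputable def chif : ℝ → ℝ := fun t => if t = 0 then 0 else 1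

lemma chif_nonneg (t : ℝ) : 0 ≤ chif t := by unfold chif; split <;> norm_num
lemma chif_le_one (t : ℝ) : chif t ≤ 1 := by unfold chif; split <;> norm_num

lemma sc1 {t : ℝ} (ht : 0 ≤ t) : Real.sqrt t * ginv t * Real.sqrt t = Real.sqrt t := by
  unfold ginv
  rcases eq_or_ne t 0 with h | h
  · simp [h]
  · have h2 : Real.sqrt t ≠ 0 := Real.sqrt_ne_zero'.mpr (lt_of_le_of_ne ht (Ne.symm h))
    simp only [if_neg h]
    field_simp

lemma sc2 {t : ℝ} (ht : 0 ≤ t) : ginv t * Real.sqrt t * Real.sqrt t * ginv t = chif t := by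
  unfold ginv chif
  rcases eq_or_ne t 0 with h | h
  · simp [h]
  · have h2 : Real.sqrt t ≠ 0 := Real.sqrt_ne_zero'.mpr (lt_of_le_of_ne ht (Ne.symm h))
    simp only [if_neg h]
    field_simp

lemma sc3 {t : ℝ} (ht : 0 ≤ t) : ginv t * t * ginv t = chif t := by
  unfold ginv chif
  rcases eq_or_ne t 0 with h | h
  · simp [h]
  · have h2 : Real.sqrt t ≠ 0 := Real.sqrt_ne_zero'.mpr (lt_of_le_of_ne ht (Ne.symm h))
    have h3 : Real.sqrt t * Real.sqrt t = t := Real.mul_self_sqrt ht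
    simp only [if_neg h]
    field_simp
    rw [Real.sq_sqrt ht]

lemma sc4 {t : ℝ} (ht : 0 ≤ t) : t * ginv t = Real.sqrt t := by
  unfold ginv
  rcases eq_or_ne t 0 with h | h
  · simp [h]
  · have h2 : Real.sqrt t ≠ 0 := Real.sqrt_ne_zero'.mpr (lt_of_le_of_ne ht (Ne.symm h))
    have h3 : Real.sqrt t * Real.sqrt t = t := Real.mul_self_sqrt ht
    simp only [if_neg h]
    field_simp
    rw [Real.sq_sqrt ht]

lemma psdSqrt_eq {M : Matrix (Fin n) (Fin n) ℝ} (hM : M.PosSemidef) :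
    psdSqrt M = sfun hM.1 Real.sqrt := by
  rw [psdSqrt, dif_pos hM]
  unfold sfun
  rfl

lemma psdSqrt_psd {M : Matrix (Fin n) (Fin n) ℝ} (hM : M.PosSemidef) :
    (psdSqrt M).PosSemidef := by
  rw [psdSqrt_eq hM]
  exact sfun_posSemidef _ (fun i => Real.sqrt_nonneg _)

lemma psdSqrt_transpose {M : Matrix (Fin n) (Fin n) ℝ} (hM : M.PosSemidef) :
    (psdSqrt M)ᵀ = psdSqrt M := by
  rw [psdSqrt_eq hM, ← realCT, sfun_conjTranspose]

lemma psdSqrt_mul_self {M : Matrix (Fin n) (Fin n) ℝ} (hM : M.PosSemidef) :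
    psdSqrt M * psdSqrt M = M := by
  rw [psdSqrt_eq hM, sfun_mul_sfun,
    sfun_congr hM.1 (g := fun t => t) (fun i => Real.mul_self_sqrt (hM.eigenvalues_nonneg i)),
    sfun_id]

end main

/-- SDP representation of the Bures–Wasserstein cross term:
`Tr[(Σ̂^{1/2} Σ Σ̂^{1/2})^{1/2}]` is the greatest value of `Tr[Z]` over all `Z` making
the block matrix `[[Σ̂, Z], [Zᵀ, Σ]]` positive semidefinite. -/
theorem bures_cross_term_sdp {n : ℕ}
    (Sighat Sig : Matrix (Fin n) (Fin n) ℝ)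
    (hSighat : Sighat.PosSemidef) (hSig : Sig.PosSemidef) :
    IsGreatest
      {t : ℝ | ∃ Z : Matrix (Fin n) (Fin n) ℝ,
        (Matrix.fromBlocks Sighat Z Zᵀ Sig).PosSemidef ∧ t = Z.trace}
      (psdSqrt (psdSqrt Sighat * Sig * psdSqrt Sighat)).trace := by
  classical
  set A := psdSqrt Sighat with hAdef
  have hA := psdSqrt_psd hSighat
  have hAT : Aᵀ = A := psdSqrt_transpose hSighat
  have hAA : A * A = Sighat := psdSqrt_mul_self hSighat
  have hAsf : A = sfun hSighat.1 Real.sqrt := psdSqrt_eq hSighat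
  set B := psdSqrt Sig with hBdef
  have hB := psdSqrt_psd hSig
  have hBT : Bᵀ = B := psdSqrt_transpose hSig
  have hBB : B * B = Sig := psdSqrt_mul_self hSig
  have hBsf : B = sfun hSig.1 Real.sqrt := psdSqrt_eq hSig
  have hMm : (A * Sig * A).PosSemidef := by
    have h := hSig.mul_mul_conjTranspose_same A
    rwa [realCT, hAT] at h
  set T : Matrix (Fin n) (Fin n) ℝ := psdSqrt (A * Sig * A) with hTdef
  have hTsf : T = sfun hMm.1 Real.sqrt := psdSqrt_eq hMm
  have hev : ∀ i, 0 ≤ hMm.1.eigenvalues i := hMm.eigenvalues_nonneg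
  have hTtr : T.trace = ∑ j, Real.sqrt (hMm.1.eigenvalues j) := by rw [hTsf, sfun_trace]
  have hGtG : (B * A)ᵀ * (B * A) = A * Sig * A := by
    rw [Matrix.transpose_mul, hAT, hBT, ← hBB]
    simp only [Matrix.mul_assoc]
  constructor
  · -- membership
    set Tpinv := sfun hMm.1 ginv with hTpdef
    have hTpT : Tpinvᵀ = Tpinv := by rw [← realCT, hTpdef, sfun_conjTranspose]
    set Cm := B * A * Tpinv with hCmdef
    set Z₀ := A * Tpinv * A * Sig with hZ₀def
    have hCmT : Cmᵀ = Tpinv * (A * B) := by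
      rw [hCmdef, Matrix.transpose_mul, Matrix.transpose_mul, hAT, hBT, hTpT]
    have hZ₀form : Z₀ = A * Cmᵀ * B := by
      rw [hCmT, hZ₀def, ← hBB]
      simp only [Matrix.mul_assoc]
    have hCtC : Cmᵀ * Cm = sfun hMm.1 chif := by
      have key : Cmᵀ * Cm = Tpinv * (A * Sig * A) * Tpinv := by
        rw [hCmT, hCmdef, ← hBB]
        simp only [Matrix.mul_assoc]
      have e1 := congrArg (fun X => Tpinv * X * Tpinv) (sfun_id hMm.1).symm
      refine (key.trans e1).trans ?_
      rw [hTpdef, sfun_mul_sfun, sfun_mul_sfun]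
      exact sfun_congr hMm.1 (fun i => sc3 (hev i))
    have hCcon : ∀ z, (Cm *ᵥ z) ⬝ᵥ (Cm *ᵥ z) ≤ z ⬝ᵥ z :=
      contraction_of_eq_sfun hMm.1 Cm hCtC (fun i => chif_nonneg _) (fun i => chif_le_one _)
    refine ⟨Z₀, Matrix.PosSemidef.of_dotProduct_mulVec_nonneg ?_ ?_, ?_⟩
    · -- Hermitian
      show (Matrix.fromBlocks Sighat Z₀ Z₀ᵀ Sig)ᴴ = _
      rw [Matrix.fromBlocks_conjTranspose, hSighat.1, hSig.1, realCT, realCT,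
        Matrix.transpose_transpose]
    · -- quadratic form
      intro x
      set x₁ := x ∘ Sum.inl with hx₁
      set x₂ := x ∘ Sum.inr with hx₂
      have hx : x = Sum.elim x₁ x₂ := funext fun i => by cases i <;> rfl
      rw [star_trivial, Matrix.fromBlocks_mulVec, hx, sumElim_dotProduct_sumElim,
        dotProduct_add, dotProduct_add]
      simp only [Sum.elim_comp_inl, Sum.elim_comp_inr]
      have e11 : x₁ ⬝ᵥ (Sighat *ᵥ x₁) = (A *ᵥ x₁) ⬝ᵥ (A *ᵥ x₁) := by
        rw [← hAA, ← Matrix.mulVec_mulVec, dot_mulVec_move, hAT]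
      have e22 : x₂ ⬝ᵥ (Sig *ᵥ x₂) = (B *ᵥ x₂) ⬝ᵥ (B *ᵥ x₂) := by
        rw [← hBB, ← Matrix.mulVec_mulVec, dot_mulVec_move, hBT]
      have e12 : x₁ ⬝ᵥ (Z₀ *ᵥ x₂) = (Cm *ᵥ (A *ᵥ x₁)) ⬝ᵥ (B *ᵥ x₂) := by
        rw [hZ₀form, ← Matrix.mulVec_mulVec, ← Matrix.mulVec_mulVec, dot_mulVec_move, hAT,
          dot_mulVec_move, Matrix.transpose_transpose]
      have e21 : x₂ ⬝ᵥ (Z₀ᵀ *ᵥ x₁) = x₁ ⬝ᵥ (Z₀ *ᵥ x₂) := by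
        rw [dot_mulVec_move, Matrix.transpose_transpose, dotProduct_comm]
      rw [e11, e22, e12, e21, e12]
      set a := Real.sqrt ((A *ᵥ x₁) ⬝ᵥ (A *ᵥ x₁)) with hadef
      set b := Real.sqrt ((B *ᵥ x₂) ⬝ᵥ (B *ᵥ x₂)) with hbdef
      have ha2 : a * a = (A *ᵥ x₁) ⬝ᵥ (A *ᵥ x₁) := Real.mul_self_sqrt (dot_self_nonneg _)
      have hb2 : b * b = (B *ᵥ x₂) ⬝ᵥ (B *ᵥ x₂) := Real.mul_self_sqrt (dot_self_nonneg _)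
      have hcross : |(Cm *ᵥ (A *ᵥ x₁)) ⬝ᵥ (B *ᵥ x₂)| ≤ a * b := by
        calc |(Cm *ᵥ (A *ᵥ x₁)) ⬝ᵥ (B *ᵥ x₂)|
            ≤ Real.sqrt ((Cm *ᵥ (A *ᵥ x₁)) ⬝ᵥ (Cm *ᵥ (A *ᵥ x₁))) * b := cs_dot _ _
          _ ≤ a * b := by
              apply mul_le_mul_of_nonneg_right _ (Real.sqrt_nonneg _)
              exact Real.sqrt_le_sqrt (hCcon (A *ᵥ x₁))
      have h1 := (abs_le.mp hcross).1
      nlinarith [sq_nonneg (a - b), sq_nonneg (a + b)]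
    · -- trace equality
      have h : Z₀.trace = T.trace := by
        calc Z₀.trace = ((A * Tpinv) * (A * Sig)).trace := by
              rw [hZ₀def]; simp only [Matrix.mul_assoc]
          _ = ((A * Sig) * (A * Tpinv)).trace := Matrix.trace_mul_comm _ _
          _ = ((A * Sig * A) * Tpinv).trace := by simp only [Matrix.mul_assoc]
          _ = (sfun hMm.1 (fun t => t) * sfun hMm.1 ginv).trace := by rw [sfun_id]
          _ = (sfun hMm.1 (fun t => t * ginv t)).trace := by rw [sfun_mul_sfun]
          _ = (sfun hMm.1 Real.sqrt).trace := by rw [sfun_congr hMm.1 (fun i => sc4 (hev i))]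
          _ = T.trace := by rw [← hTsf]
      exact h.symm
  · -- upper bound
    rintro t ⟨Z, hZpsd, rfl⟩
    obtain ⟨K, hK⟩ : ∃ K : Matrix (Fin n ⊕ Fin n) (Fin n ⊕ Fin n) ℝ,
        Matrix.fromBlocks Sighat Z Zᵀ Sig = Kᴴ * K := by
      open scoped MatrixOrder in
      obtain ⟨K, hK⟩ := CStarAlgebra.nonneg_iff_eq_star_mul_self.mp hZpsd.nonneg
      exact ⟨K, hK⟩
    set K₁ : Matrix (Fin n ⊕ Fin n) (Fin n) ℝ := K.submatrix id Sum.inl with hK₁def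
    set K₂ : Matrix (Fin n ⊕ Fin n) (Fin n) ℝ := K.submatrix id Sum.inr with hK₂def
    have hPK : K₁ᵀ * K₁ = Sighat := by
      ext i j
      have h := congrFun (congrFun hK (Sum.inl i)) (Sum.inl j)
      simp only [Matrix.fromBlocks_apply₁₁, Matrix.mul_apply, Matrix.conjTranspose_apply,
        star_trivial] at h
      simp only [Matrix.mul_apply, Matrix.transpose_apply, Matrix.submatrix_apply, id]
      exact h.symm
    have hZK : K₁ᵀ * K₂ = Z := by
      ext i j
      have h := congrFun (congrFun hK (Sum.inl i)) (Sum.inr j)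
      simp only [Matrix.fromBlocks_apply₁₂, Matrix.mul_apply, Matrix.conjTranspose_apply,
        star_trivial] at h
      simp only [Matrix.mul_apply, Matrix.transpose_apply, Matrix.submatrix_apply, id]
      exact h.symm
    have hQK : K₂ᵀ * K₂ = Sig := by
      ext i j
      have h := congrFun (congrFun hK (Sum.inr i)) (Sum.inr j)
      simp only [Matrix.fromBlocks_apply₂₂, Matrix.mul_apply, Matrix.conjTranspose_apply,
        star_trivial] at h
      simp only [Matrix.mul_apply, Matrix.transpose_apply, Matrix.submatrix_apply, id]
      exact h.symm
    set Apinv := sfun hSighat.1 ginv with hApdef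
    set Bpinv := sfun hSig.1 ginv with hBpdef
    have hApT : Apinvᵀ = Apinv := by rw [← realCT, hApdef, sfun_conjTranspose]
    have hBpT : Bpinvᵀ = Bpinv := by rw [← realCT, hBpdef, sfun_conjTranspose]
    set W₁ := K₁ * Apinv with hW₁def
    set W₂ := K₂ * Bpinv with hW₂def
    have hAp3 : A * Apinv * A = A := by
      rw [hAsf, hApdef, sfun_mul_sfun, sfun_mul_sfun]
      exact sfun_congr hSighat.1 (fun i => sc1 (hSighat.eigenvalues_nonneg i))
    have hBp3 : B * Bpinv * B = B := by
      rw [hBsf, hBpdef, sfun_mul_sfun, sfun_mul_sfun]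
      exact sfun_congr hSig.1 (fun i => sc1 (hSig.eigenvalues_nonneg i))
    have factor : ∀ (K' : Matrix (Fin n ⊕ Fin n) (Fin n) ℝ) (S A' Ap : Matrix (Fin n) (Fin n) ℝ),
        K'ᵀ * K' = S → A' * A' = S → A' * Ap * A' = A' → A'ᵀ = A' →
        (K' * Ap) * A' = K' := by
      intro K' S A' Ap hS hA'A' hAp3' hA'T
      have hR : A' * (Ap * A' - 1) = 0 := by
        rw [Matrix.mul_sub, mul_one, ← Matrix.mul_assoc, hAp3', sub_self]
      have h0 : (K' * (Ap * A' - 1))ᴴ * (K' * (Ap * A' - 1)) = 0 := by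
        rw [Matrix.conjTranspose_mul, Matrix.mul_assoc, ← Matrix.mul_assoc K'ᴴ K' _,
          realCT K', hS, ← hA'A', Matrix.mul_assoc A' A' _, hR, Matrix.mul_zero,
          Matrix.mul_zero]
      have hKR : K' * (Ap * A' - 1) = 0 := Matrix.conjTranspose_mul_self_eq_zero.mp h0
      calc (K' * Ap) * A' = K' * (Ap * A') := by rw [Matrix.mul_assoc]
        _ = K' * (Ap * A' - 1) + K' := by rw [Matrix.mul_sub, Matrix.mul_one]; abel
        _ = K' := by rw [hKR, zero_add]
    have hW₁A : W₁ * A = K₁ := factor K₁ Sighat A Apinv hPK hAA hAp3 hAT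
    have hW₂B : W₂ * B = K₂ := factor K₂ Sig B Bpinv hQK hBB hBp3 hBT
    have hW₁tW₁ : W₁ᵀ * W₁ = sfun hSighat.1 chif := by
      rw [hW₁def, Matrix.transpose_mul, hApT]
      calc Apinv * K₁ᵀ * (K₁ * Apinv) = Apinv * ((K₁ᵀ * K₁) * Apinv) := by
            simp only [Matrix.mul_assoc]
        _ = Apinv * (sfun hSighat.1 (fun t => t) * Apinv) := by rw [hPK, sfun_id]
        _ = sfun hSighat.1 chif := by
            rw [hApdef, sfun_mul_sfun, sfun_mul_sfun]
            refine sfun_congr hSighat.1 (fun i => ?_)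
            have h := sc3 (hSighat.eigenvalues_nonneg i)
            rw [← h]; ring
    have hW₂tW₂ : W₂ᵀ * W₂ = sfun hSig.1 chif := by
      rw [hW₂def, Matrix.transpose_mul, hBpT]
      calc Bpinv * K₂ᵀ * (K₂ * Bpinv) = Bpinv * ((K₂ᵀ * K₂) * Bpinv) := by
            simp only [Matrix.mul_assoc]
        _ = Bpinv * (sfun hSig.1 (fun t => t) * Bpinv) := by rw [hQK, sfun_id]
        _ = sfun hSig.1 chif := by
            rw [hBpdef, sfun_mul_sfun, sfun_mul_sfun]
            refine sfun_congr hSig.1 (fun i => ?_)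
            have h := sc3 (hSig.eigenvalues_nonneg i)
            rw [← h]; ring
    have hW₁con : ∀ z, (W₁ *ᵥ z) ⬝ᵥ (W₁ *ᵥ z) ≤ z ⬝ᵥ z :=
      contraction_of_eq_sfun hSighat.1 W₁ hW₁tW₁ (fun i => chif_nonneg _) (fun i => chif_le_one _)
    have hW₂con : ∀ z, (W₂ *ᵥ z) ⬝ᵥ (W₂ *ᵥ z) ≤ z ⬝ᵥ z :=
      contraction_of_eq_sfun hSig.1 W₂ hW₂tW₂ (fun i => chif_nonneg _) (fun i => chif_le_one _)
    have hW₂Tcon := transpose_contraction W₂ hW₂con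
    set D := W₁ᵀ * W₂ with hDdef
    have hZeq : Z = A * D * B := by
      rw [← hZK, ← hW₁A, ← hW₂B, Matrix.transpose_mul, hAT, hDdef]
      simp only [Matrix.mul_assoc]
    have htr : Z.trace = (D * (B * A)).trace := by
      rw [hZeq]
      calc (A * D * B).trace = (B * (A * D)).trace := Matrix.trace_mul_comm _ _
        _ = ((B * A) * D).trace := by simp only [Matrix.mul_assoc]
        _ = (D * (B * A)).trace := Matrix.trace_mul_comm _ _
    have hub : ∀ j, evec hMm.1 j ⬝ᵥ ((D * (B * A)) *ᵥ evec hMm.1 j) ≤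
        Real.sqrt (hMm.1.eigenvalues j) := by
      intro j
      set v := evec hMm.1 j with hvdef
      have hv1 : v ⬝ᵥ v = 1 := evec_dot_self _ j
      have hGv : ((B * A) *ᵥ v) ⬝ᵥ ((B * A) *ᵥ v) = hMm.1.eigenvalues j := by
        rw [dot_mulVec_self, hGtG, mulVec_evec hMm.1 j, dotProduct_smul, smul_eq_mul, hv1,
          mul_one]
      have step1 : v ⬝ᵥ ((D * (B * A)) *ᵥ v) = (Dᵀ *ᵥ v) ⬝ᵥ ((B * A) *ᵥ v) := by
        rw [← Matrix.mulVec_mulVec, dot_mulVec_move]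
      have hDv : (Dᵀ *ᵥ v) ⬝ᵥ (Dᵀ *ᵥ v) ≤ 1 := by
        have hDT : Dᵀ = W₂ᵀ * W₁ := by
          rw [hDdef, Matrix.transpose_mul, Matrix.transpose_transpose]
        rw [hDT, ← Matrix.mulVec_mulVec]
        calc (W₂ᵀ *ᵥ (W₁ *ᵥ v)) ⬝ᵥ (W₂ᵀ *ᵥ (W₁ *ᵥ v)) ≤ (W₁ *ᵥ v) ⬝ᵥ (W₁ *ᵥ v) := hW₂Tcon _
          _ ≤ v ⬝ᵥ v := hW₁con v
          _ = 1 := hv1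
      calc v ⬝ᵥ ((D * (B * A)) *ᵥ v) = (Dᵀ *ᵥ v) ⬝ᵥ ((B * A) *ᵥ v) := step1
        _ ≤ |(Dᵀ *ᵥ v) ⬝ᵥ ((B * A) *ᵥ v)| := le_abs_self _
        _ ≤ Real.sqrt ((Dᵀ *ᵥ v) ⬝ᵥ (Dᵀ *ᵥ v)) *
            Real.sqrt (((B * A) *ᵥ v) ⬝ᵥ ((B * A) *ᵥ v)) := cs_dot _ _
        _ ≤ 1 * Real.sqrt (((B * A) *ᵥ v) ⬝ᵥ ((B * A) *ᵥ v)) := by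
            apply mul_le_mul_of_nonneg_right _ (Real.sqrt_nonneg _)
            exact Real.sqrt_le_one.mpr hDv
        _ = Real.sqrt (hMm.1.eigenvalues j) := by rw [one_mul, hGv]
    rw [htr, trace_eq_sum_evec hMm.1, hTtr]
    exact Finset.sum_le_sum (fun j _ => hub j)
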